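/- Let d ≥ 2 and let D ⊂ ℝ^d be a nonempty bounded open set with diam(D) ≤ 1/2. Let Φ : (0,∞) → (0,∞) be an increasing homeomorphism of (0,∞) onto itself satisfying the global weak scaling condition with exponents 2δ₁, 2δ₂ (0 < δ₁ ≤ δ₂ < 1). For x, y ∈ D with x ≠ y define G̃(x,y) := min(Φ(δ_D(x))^{1/2}/Φ(|x−y|)^{1/2}, 1) · min(Φ(δ_D(y))^{1/2}/Φ(|x−y|)^{1/2}, 1) · Φ(|x−y|)^{1/2}/|x−y|^d. Then there exists C > 0 such that for every x ∈ D, ∫_D G̃(x,y) dy ≤ C·Φ(δ_D(x))^{1/2}·log(1/δ_D(x)). -/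

import Mathlib

/-!
For `x ∈ D` put `a = δ_D(x)`. Dropping the factor with `δ_D(y)`, `G̃(x,y)` is at most
`min(Φ(a), Φ(r))^{1/2} / r^d` with `r = |x - y| ≤ 1/2`. Below `a`, the lower scaling bound gives
`Φ(r)^{1/2} ≤ c₁^{-1/2} Φ(a)^{1/2} (r/a)^{δ₁}`; above `a` we keep `Φ(a)^{1/2}`. In polar
coordinates the first range contributes `O(Φ(a)^{1/2})` and the second
`Φ(a)^{1/2} log(1/(2a))`, and `log(1/a) ≥ log 2` absorbs the constant term.
-/

open MeasureTheory Set Metric Real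

/-- `r ^ (d - 1)` times the majorant of `G̃(x, ·) / Φ(a)^{1/2}` at distance `r`, with
`A = c₁^{-1/2}`, `a = δ_D(x)` and `ρ` a bound for `diam D`. -/
noncomputable def radialBound (A δ a ρ r : ℝ) : ℝ :=
  (Ioc 0 a).indicator (fun r => A / a ^ δ * r ^ (δ - 1)) r + (Ioc a ρ).indicator (fun r => r⁻¹) r

section radialBound

variable {A δ a ρ : ℝ}

lemma integrableOn_Ioc_const_mul_rpow (C : ℝ) (hδ : 0 < δ) :
    IntegrableOn (fun r => C * r ^ (δ - 1)) (Ioc 0 a) :=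
  (intervalIntegral.intervalIntegrable_rpow' (by linarith)).1.const_mul _

lemma integrableOn_Ioc_inv (ha : 0 < a) : IntegrableOn (fun r : ℝ => r⁻¹) (Ioc a ρ) :=
  (ContinuousOn.integrableOn_Icc (continuousOn_inv₀.mono fun _ hr =>
    (ha.trans_le hr.1).ne')).mono_set Ioc_subset_Icc_self

lemma radialBound_nonneg (hA : 0 ≤ A) (ha : 0 ≤ a) (r : ℝ) : 0 ≤ radialBound A δ a ρ r := by
  refine add_nonneg (indicator_nonneg (fun r hr => ?_) r) (indicator_nonneg (fun r hr => ?_) r)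
  · have := rpow_nonneg hr.1.le (δ - 1)
    positivity
  · exact inv_nonneg.2 (ha.trans hr.1.le)

lemma radialBound_of_nonpos (ha : 0 ≤ a) {r : ℝ} (hr : r ≤ 0) : radialBound A δ a ρ r = 0 := by
  rw [radialBound, indicator_of_notMem, indicator_of_notMem, add_zero]
  · exact fun h => (ha.trans_lt h.1).not_ge hr
  · exact fun h => h.1.not_ge hr

lemma integrable_radialBound (hδ : 0 < δ) (ha : 0 < a) : Integrable (radialBound A δ a ρ) :=
  ((integrableOn_Ioc_const_mul_rpow _ hδ).integrable_indicator measurableSet_Ioc).add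
    ((integrableOn_Ioc_inv ha).integrable_indicator measurableSet_Ioc)

lemma integral_radialBound (hδ : 0 < δ) (ha : 0 < a) (haρ : a ≤ ρ) :
    ∫ r, radialBound A δ a ρ r = A / δ + log (ρ / a) := by
  have h0 : (0 : ℝ) ∉ uIcc a ρ := by
    rw [uIcc_of_le haρ]; exact fun h => ha.not_ge h.1
  simp only [radialBound]
  rw [integral_add ((integrableOn_Ioc_const_mul_rpow _ hδ).integrable_indicator measurableSet_Ioc)
      ((integrableOn_Ioc_inv ha).integrable_indicator measurableSet_Ioc),
    integral_indicator measurableSet_Ioc, integral_indicator measurableSet_Ioc,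
    ← intervalIntegral.integral_of_le ha.le, ← intervalIntegral.integral_of_le haρ,
    intervalIntegral.integral_const_mul, integral_rpow (.inl (by linarith)), integral_inv h0,
    sub_add_cancel, zero_rpow hδ.ne']
  field_simp [(rpow_pos_of_pos ha δ).ne']
  ring

lemma integral_radialBound_le (hA : 0 ≤ A) (hδ : 0 < δ) (ha : 0 < a) (haρ : a ≤ ρ)
    (hρ : ρ ≤ 1 / 2) :
    ∫ r, radialBound A δ a ρ r ≤ (A / (δ * log 2) + 1) * log (1 / a) := by
  have hlog2 : 0 < log 2 := log_pos one_lt_two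
  have hlog : log 2 ≤ log (1 / a) :=
    log_le_log two_pos (by rw [le_one_div two_pos ha]; linarith)
  have hlogρ : log (ρ / a) ≤ log (1 / a) :=
    log_le_log (div_pos (ha.trans_le haρ) ha) (by gcongr; linarith)
  rw [integral_radialBound hδ ha haρ, add_mul, one_mul]
  gcongr
  calc A / δ = A / (δ * log 2) * log 2 := by field_simp
    _ ≤ A / (δ * log 2) * log (1 / a) := by gcongr

lemma sqrt_le_of_weak_scaling {c u v r : ℝ} (hc : 0 < c) (hv : 0 < v) (hr : 0 < r) (hra : r ≤ a)
    (hscale : c * (a / r) ^ (2 * δ) ≤ u / v) : √v ≤ √u / √c * (r / a) ^ δ := by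
  have ha : 0 < a := hr.trans_le hra
  have ht : 0 < (r / a) ^ δ := rpow_pos_of_pos (div_pos hr ha) δ
  have hpow : (a / r) ^ (2 * δ) = (((r / a) ^ δ) ^ 2)⁻¹ := by
    rw [← inv_div, inv_rpow (div_pos hr ha).le, mul_comm, rpow_mul (div_pos hr ha).le,
      rpow_two]
  have hv' : v ≤ u * ((r / a) ^ δ) ^ 2 / c := by
    rw [hpow, le_div_iff₀ hv] at hscale
    rw [le_div_iff₀ hc]
    field_simp at hscale ⊢
    linarith
  calc √v ≤ √(u * ((r / a) ^ δ) ^ 2 / c) := sqrt_le_sqrt hv'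
    _ = √u / √c * (r / a) ^ δ := by
      rw [sqrt_div' _ hc.le, sqrt_mul' _ (sq_nonneg _), sqrt_sq ht.le]; ring

lemma min_sqrt_div_le_radialBound {c u v r : ℝ} (hc : 0 < c) (hv : 0 < v) (hr : 0 < r)
    (hrρ : r ≤ ρ) (hscale : r ≤ a → c * (a / r) ^ (2 * δ) ≤ u / v) :
    min √u √v / r ≤ √u * radialBound (1 / √c) δ a ρ r := by
  rcases le_or_gt r a with hra | har
  · have ha : 0 < a := hr.trans_le hra
    rw [radialBound, indicator_of_mem (show r ∈ Ioc 0 a from ⟨hr, hra⟩),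
      indicator_of_notMem fun h => h.1.not_ge hra, add_zero]
    calc min √u √v / r ≤ √u / √c * (r / a) ^ δ / r := by
          gcongr
          exact (min_le_right _ _).trans (sqrt_le_of_weak_scaling hc hv hr hra (hscale hra))
      _ = √u * (1 / √c / a ^ δ * r ^ (δ - 1)) := by
          rw [div_rpow hr.le ha.le, rpow_sub_one hr.ne']; ring
  · rw [radialBound, indicator_of_notMem fun h => h.2.not_gt har,
      indicator_of_mem (show r ∈ Ioc a ρ from ⟨har, hrρ⟩), zero_add, ← div_eq_mul_inv]
    gcongr
    exact min_le_left _ _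

end radialBound

/-- `G̃(x,y)` with `a = δ_D(x)`, `b = δ_D(y)`, `s = |x - y|` and `n = d`. -/
noncomputable def greenBound (Φ : ℝ → ℝ) (n : ℕ) (a b s : ℝ) : ℝ :=
  min (√(Φ a) / √(Φ s)) 1 * min (√(Φ b) / √(Φ s)) 1 * (√(Φ s) / s ^ n)

lemma greenBound_nonneg (Φ : ℝ → ℝ) (n : ℕ) (a b : ℝ) {s : ℝ} (hs : 0 ≤ s) :
    0 ≤ greenBound Φ n a b s := by
  unfold greenBound; positivity

lemma greenBound_le {Φ : ℝ → ℝ} {n : ℕ} {c δ a b ρ s : ℝ} (hn : n ≠ 0) (hc : 0 < c)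
    (hΦ : ∀ t, 0 < t → 0 < Φ t) (hscale : ∀ r, 0 < r → r ≤ a → c * (a / r) ^ (2 * δ) ≤ Φ a / Φ r)
    (ha : 0 ≤ a) (hs : 0 ≤ s) (hsρ : s ≤ ρ) :
    greenBound Φ n a b s ≤ √(Φ a) * radialBound (1 / √c) δ a ρ s / s ^ (n - 1) := by
  rcases hs.eq_or_lt with rfl | hs
  · simp [greenBound, zero_pow hn, radialBound_of_nonpos ha le_rfl]
  have hΦs := hΦ s hs
  have hsqrt : 0 < √(Φ s) := sqrt_pos.2 hΦs
  calc greenBound Φ n a b s ≤ min (√(Φ a) / √(Φ s)) 1 * 1 * (√(Φ s) / s ^ n) := by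
        unfold greenBound; gcongr; exact min_le_right _ _
    _ = min √(Φ a) √(Φ s) / s / s ^ (n - 1) := by
        rw [mul_one, min_mul_of_nonneg _ _ (by positivity), div_mul_div_cancel₀ hsqrt.ne',
          one_mul, min_div_div_right (by positivity), div_div, ← pow_succ', Nat.sub_add_cancel
          (Nat.one_le_iff_ne_zero.2 hn)]
    _ ≤ √(Φ a) * radialBound (1 / √c) δ a ρ s / s ^ (n - 1) := by
        gcongr; exact min_sqrt_div_le_radialBound hc hΦs hs hsρ (hscale s hs)

lemma infDist_compl_pos {E : Type*} [NormedAddCommGroup E] [NormedSpace ℝ E] [Nontrivial E]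
    {D : Set E} (hD : IsOpen D) (hDb : Bornology.IsBounded D) {x : E} (hx : x ∈ D) :
    0 < infDist x Dᶜ :=
  (hD.isClosed_compl.notMem_iff_infDist_pos
    (nonempty_compl.2 fun h => NormedSpace.unbounded_univ ℝ E (h ▸ hDb))).1 (not_not.2 hx)

lemma two_mul_infDist_compl_le_diam {E : Type*} [NormedAddCommGroup E] [NormedSpace ℝ E]
    [Nontrivial E] {D : Set E} (hD : Bornology.IsBounded D) (x : E) :
    2 * infDist x Dᶜ ≤ diam D :=
  (diam_ball_eq x infDist_nonneg).symm.trans_le (diam_mono ball_infDist_compl_subset hD)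

section radial

variable {E : Type*} [NormedAddCommGroup E] [NormedSpace ℝ E] [FiniteDimensional ℝ E]
  [MeasurableSpace E] [BorelSpace E] [Nontrivial E] (μ : Measure E) [μ.IsAddHaarMeasure]
  {g : ℝ → ℝ}

local notation "dim" => Module.finrank ℝ E

lemma integrable_div_pow_dist_addHaar (hg : Integrable g) (x : E) :
    Integrable (fun y => g (dist x y) / dist x y ^ (dim - 1)) μ := by
  have hnorm : Integrable (fun y : E => g ‖y‖ / ‖y‖ ^ (dim - 1)) μ := by
    rw [integrable_fun_norm_addHaar μ (f := fun r => g r / r ^ (dim - 1))]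
    refine (integrableOn_congr_fun (fun r (hr : 0 < r) => ?_) measurableSet_Ioi).1 hg.integrableOn
    rw [smul_eq_mul, mul_div_cancel₀ _ (pow_ne_zero _ hr.ne')]
  simpa only [dist_comm x, dist_eq_norm] using hnorm.comp_sub_right x

lemma integral_div_pow_dist_addHaar (hg : ∀ r ≤ 0, g r = 0) (x : E) :
    ∫ y, g (dist x y) / dist x y ^ (dim - 1) ∂μ = dim * μ.real (ball 0 1) * ∫ r, g r := by
  simp only [dist_comm x, dist_eq_norm]
  rw [integral_sub_right_eq_self (fun y => g ‖y‖ / ‖y‖ ^ (dim - 1)) x,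
    integral_fun_norm_addHaar μ (fun r => g r / r ^ (dim - 1)), nsmul_eq_mul, smul_eq_mul,
    mul_assoc, setIntegral_congr_fun measurableSet_Ioi fun r (hr : 0 < r) => by
      rw [smul_eq_mul, mul_div_cancel₀ _ (pow_ne_zero _ hr.ne')],
    setIntegral_eq_integral_of_forall_compl_eq_zero (s := Ioi 0) fun r hr => hg r (not_lt.1 hr)]


lemma setIntegral_le_of_le_div_pow_dist (hg : Integrable g) (hg0 : ∀ r, 0 ≤ g r)
    (hg_nonpos : ∀ r ≤ 0, g r = 0) (x : E) {s : Set E} (hs : MeasurableSet s) {f : E → ℝ}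
    (hf0 : ∀ y ∈ s, 0 ≤ f y) (hfg : ∀ y ∈ s, f y ≤ g (dist x y) / dist x y ^ (dim - 1)) :
    ∫ y in s, f y ∂μ ≤ dim * μ.real (ball 0 1) * ∫ r, g r := by
  have hint := integrable_div_pow_dist_addHaar μ hg x
  rw [← integral_div_pow_dist_addHaar μ hg_nonpos x]
  exact (integral_mono_of_nonneg (ae_restrict_of_forall_mem hs hf0) hint.integrableOn
    (ae_restrict_of_forall_mem hs hfg)).trans
    (setIntegral_le_integral hint (ae_of_all _ fun y => div_nonneg (hg0 _) (by positivity)))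

end radial

theorem stmt_11_general (d : ℕ) (hd : 2 ≤ d)
    (D : Set (EuclideanSpace ℝ (Fin d)))
    (hDopen : IsOpen D) (hDbdd : Bornology.IsBounded D)
    (hDdiam : Metric.diam D ≤ 1 / 2)
    (Φ : ℝ → ℝ)
    (hΦbij : Set.BijOn Φ (Set.Ioi 0) (Set.Ioi 0))
    (c₁ c₂ δ₁ δ₂ : ℝ) (hc₁ : 0 < c₁)
    (hδ₁ : 0 < δ₁)
    (hΦscale : ∀ r R : ℝ, 0 < r → r ≤ R →
      c₁ * (R / r) ^ (2 * δ₁) ≤ Φ R / Φ r ∧ Φ R / Φ r ≤ c₂ * (R / r) ^ (2 * δ₂)) :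
    ∃ C : ℝ, 0 < C ∧ ∀ x ∈ D,
      (∫ y in D,
          min (Real.sqrt (Φ (Metric.infDist x Dᶜ)) / Real.sqrt (Φ (dist x y))) 1 *
            min (Real.sqrt (Φ (Metric.infDist y Dᶜ)) / Real.sqrt (Φ (dist x y))) 1 *
            (Real.sqrt (Φ (dist x y)) / dist x y ^ d)) ≤
        C * Real.sqrt (Φ (Metric.infDist x Dᶜ)) *
          Real.log (1 / Metric.infDist x Dᶜ) := by
  have : Nontrivial (EuclideanSpace ℝ (Fin d)) :=
    Module.nontrivial_of_finrank_pos (R := ℝ) (by rw [finrank_euclideanSpace_fin]; omega)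
  set V := volume.real (ball (0 : EuclideanSpace ℝ (Fin d)) 1)
  have hV : 0 < V :=
    ENNReal.toReal_pos (measure_ball_pos volume 0 one_pos).ne' measure_ball_lt_top.ne
  refine ⟨d * V * (1 / √c₁ / (δ₁ * log 2) + 1), by positivity, fun x hx => ?_⟩
  set a := infDist x Dᶜ
  have ha : 0 < a := infDist_compl_pos hDopen hDbdd hx
  have ha2 : 2 * a ≤ 1 / 2 := (two_mul_infDist_compl_le_diam hDbdd x).trans hDdiam
  set M := radialBound (1 / √c₁) δ₁ a (1 / 2)
  have hle : ∀ y ∈ D, greenBound Φ d a (infDist y Dᶜ) (dist x y)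
      ≤ √(Φ a) * M (dist x y) / dist x y ^ (d - 1) := fun y hy =>
    greenBound_le (by omega) hc₁ (fun t ht => hΦbij.mapsTo ht)
      (fun r hr hra => (hΦscale r a hr hra).1) ha.le dist_nonneg
      ((dist_le_diam_of_mem hDbdd hx hy).trans hDdiam)
  calc ∫ y in D, greenBound Φ d a (infDist y Dᶜ) (dist x y)
      ≤ d * V * ∫ r, √(Φ a) * M r := by
        simpa only [finrank_euclideanSpace_fin] using
          setIntegral_le_of_le_div_pow_dist volume ((integrable_radialBound hδ₁ ha).const_mul _)
            (fun r => mul_nonneg (sqrt_nonneg _) (radialBound_nonneg (by positivity) ha.le r))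
            (fun r hr => by simp [radialBound_of_nonpos ha.le hr]) x hDopen.measurableSet
            (fun y _ => greenBound_nonneg _ _ _ _ dist_nonneg)
            (by simpa only [finrank_euclideanSpace_fin] using hle)
    _ ≤ d * V * (√(Φ a) * ((1 / √c₁ / (δ₁ * log 2) + 1) * log (1 / a))) := by
        rw [integral_const_mul]
        gcongr
        exact integral_radialBound_le (by positivity) hδ₁ ha (by linarith) le_rfl
    _ = d * V * (1 / √c₁ / (δ₁ * log 2) + 1) * √(Φ a) * log (1 / a) := by ring

/-- upper bound in Lemma 6.8 of the paper, case `ψ(λ)=λ^{1/2}`: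
`∫_D G̃(x,y) dy ≤ C·Φ(δ_D(x))^{1/2}·log(1/δ_D(x))`. -/
theorem stmt_11 (d : ℕ) (hd : 2 ≤ d)
    (D : Set (EuclideanSpace ℝ (Fin d)))
    (hDopen : IsOpen D) (hDne : D.Nonempty) (hDbdd : Bornology.IsBounded D)
    (hDdiam : Metric.diam D ≤ 1 / 2)
    (Φ : ℝ → ℝ)
    (hΦmono : StrictMonoOn Φ (Set.Ioi 0))
    (hΦbij : Set.BijOn Φ (Set.Ioi 0) (Set.Ioi 0))
    (c₁ c₂ δ₁ δ₂ : ℝ) (hc₁ : 0 < c₁) (hc₂ : 0 < c₂)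
    (hδ₁ : 0 < δ₁) (hδ : δ₁ ≤ δ₂) (hδ₂ : δ₂ < 1)
    (hΦscale : ∀ r R : ℝ, 0 < r → r ≤ R →
      c₁ * (R / r) ^ (2 * δ₁) ≤ Φ R / Φ r ∧ Φ R / Φ r ≤ c₂ * (R / r) ^ (2 * δ₂)) :
    ∃ C : ℝ, 0 < C ∧ ∀ x ∈ D,
      (∫ y in D,
          min (Real.sqrt (Φ (Metric.infDist x Dᶜ)) / Real.sqrt (Φ (dist x y))) 1 *
            min (Real.sqrt (Φ (Metric.infDist y Dᶜ)) / Real.sqrt (Φ (dist x y))) 1 *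
            (Real.sqrt (Φ (dist x y)) / dist x y ^ d)) ≤
        C * Real.sqrt (Φ (Metric.infDist x Dᶜ)) *
          Real.log (1 / Metric.infDist x Dᶜ) :=
  stmt_11_general d hd D hDopen hDbdd hDdiam Φ hΦbij c₁ c₂ δ₁ δ₂ hc₁ hδ₁ hΦscale
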